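/- arXiv:math/0602529 — 3 statements merged into one kernel-verified Lean document; each statement's English description precedes it below -/
import Mathlib

section
/- Fix t > 0. For δ > 0 define τ_δ(s) = min(t, (⌊s/δ⌋ + 1)δ) − s for s ∈ [0, t]. If H : [0, t] → ℝ is measurable with ∫_0^t H_s² ds < ∞, then ∫_0^t (τ_δ(s)/δ) H_s ds → (1/2) ∫_0^t H_s ds as δ → 0⁺. -/
/-!
On every full grid cell `[kδ, (k+1)δ] ⊆ [0, t]` the weight `τ_δ/δ` decreases linearly from `1`
to `0`, so `τ_δ/δ - 1/2` has mean zero there. Against a continuous `g` one may therefore freeze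
`g` at the left end of each cell; the error is at most `(t ω_g(δ) + δ ‖g‖_∞)/2`, where the second
term comes from the last, incomplete cell. Since `0 ≤ τ_δ/δ ≤ 1`, the convergence passes from
continuous functions to all of `L¹[0, t]` by density, and `L²[0, t] ⊆ L¹[0, t]`.
-/

open MeasureTheory Filter Set Topology

noncomputable def tauWeight (t δ s : ℝ) : ℝ := (min t (((⌊s / δ⌋ : ℤ) + 1 : ℝ) * δ) - s) / δ

section tauWeight

variable {t δ s : ℝ}

lemma tauWeight_nonneg (hδ : 0 < δ) (hs : s ≤ t) : 0 ≤ tauWeight t δ s := by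
  refine div_nonneg (sub_nonneg.2 (le_min hs ?_)) hδ.le
  linarith [Int.sub_floor_div_mul_lt s hδ]

lemma tauWeight_le_one (hδ : 0 < δ) : tauWeight t δ s ≤ 1 := by
  rw [tauWeight, div_le_one hδ]
  linarith [min_le_right t (((⌊s / δ⌋ : ℝ) + 1) * δ), Int.sub_floor_div_mul_nonneg s hδ]

lemma abs_tauWeight_sub_half_le (hδ : 0 < δ) (hs : s ≤ t) : |tauWeight t δ s - 1 / 2| ≤ 1 / 2 :=
  abs_le.2 ⟨by linarith [tauWeight_nonneg hδ hs],
    by linarith [tauWeight_le_one (t := t) (s := s) hδ]⟩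

lemma measurable_tauWeight (t δ : ℝ) : Measurable (tauWeight t δ) := by
  have hfloor : Measurable fun s : ℝ => (⌊s / δ⌋ : ℝ) :=
    measurable_from_top.comp (measurable_id.div_const δ).floor
  exact ((measurable_const.min ((hfloor.add_const 1).mul_const δ)).sub measurable_id).div_const δ

lemma tauWeight_eq_of_mem_Ico {k : ℤ} (hδ : 0 < δ) (hk : (k + 1) * δ ≤ t)
    (hs : s ∈ Ico (k * δ) ((k + 1) * δ)) : tauWeight t δ s = ((k + 1) * δ - s) / δ := by
  have hfloor : ⌊s / δ⌋ = k := by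
    rw [Int.floor_eq_iff, le_div_iff₀ hδ, div_lt_iff₀ hδ]
    exact hs
  rw [tauWeight, hfloor, min_eq_right hk]

lemma integral_tauWeight_sub_half_eq_zero {k : ℤ} (hδ : 0 < δ) (hk : (k + 1) * δ ≤ t) :
    ∫ s in k * δ..(k + 1) * δ, (tauWeight t δ s - 1 / 2) = 0 := by
  have hae : ∀ᵐ s, s ∈ uIoc (k * δ) ((k + 1) * δ) →
      tauWeight t δ s - 1 / 2 = ((k + 1) * δ - s) / δ - 1 / 2 := by
    filter_upwards [Measure.ae_ne volume ((k + 1) * δ)] with s hne hs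
    rw [uIoc_of_le (by nlinarith)] at hs
    rw [tauWeight_eq_of_mem_Ico hδ hk ⟨hs.1.le, lt_of_le_of_ne hs.2 hne⟩]
  rw [intervalIntegral.integral_congr_ae hae,
    intervalIntegral.integral_comp_sub_left (fun x => x / δ - 1 / 2),
    intervalIntegral.integral_sub (intervalIntegral.intervalIntegrable_id.div_const δ)
    intervalIntegrable_const, intervalIntegral.integral_div, integral_id,
    intervalIntegral.integral_const, smul_eq_mul]
  field_simp
  ring

end tauWeight

lemma integrableOn_tauWeight_sub_half_mul {t δ : ℝ} (hδ : 0 < δ) {g : ℝ → ℝ}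
    (hg : IntegrableOn g (Icc 0 t)) :
    IntegrableOn (fun s => (tauWeight t δ s - 1 / 2) * g s) (Icc 0 t) :=
  hg.bdd_mul ((measurable_tauWeight t δ).sub_const _).aestronglyMeasurable <|
    (ae_restrict_iff' measurableSet_Icc).2 <|
      ae_of_all _ fun _ hs => abs_tauWeight_sub_half_le hδ hs.2

lemma MeasureTheory.IntegrableOn.intervalIntegrable_of_mem_Icc {f : ℝ → ℝ} {c d a b : ℝ}
    (hf : IntegrableOn f (Icc c d)) (ha : a ∈ Icc c d) (hb : b ∈ Icc c d) :
    IntervalIntegrable f volume a b :=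
  (hf.mono_set (uIcc_subset_Icc ha hb)).intervalIntegrable

theorem intervalIntegral.abs_integral_mul_le_of_integral_eq_zero {f g : ℝ → ℝ} {a b M η : ℝ}
    (hf : IntervalIntegrable f volume a b)
    (hfg : IntervalIntegrable (fun x => f x * g x) volume a b) (hf0 : ∫ x in a..b, f x = 0)
    (hfM : ∀ x ∈ uIoc a b, |f x| ≤ M) (hgη : ∀ x ∈ uIoc a b, |g x - g a| ≤ η) :
    |∫ x in a..b, f x * g x| ≤ M * η * |b - a| := by
  have hcentered : ∫ x in a..b, f x * g x = ∫ x in a..b, f x * (g x - g a) := by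
    simp only [mul_sub]
    rw [intervalIntegral.integral_sub hfg (hf.mul_const _), intervalIntegral.integral_mul_const,
      hf0, zero_mul, sub_zero]
  rw [hcentered, ← Real.norm_eq_abs]
  refine intervalIntegral.norm_integral_le_of_norm_le_const fun x hx => ?_
  rw [Real.norm_eq_abs, abs_mul]
  exact mul_le_mul (hfM x hx) (hgη x hx) (abs_nonneg _) ((abs_nonneg _).trans (hfM x hx))

lemma abs_integral_tauWeight_sub_half_mul_cell_le {t δ η : ℝ} {g : ℝ → ℝ} {k : ℕ} (hδ : 0 < δ)
    (hk : (k + 1) * δ ≤ t) (hg : IntegrableOn g (Icc 0 t))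
    (hη : ∀ x ∈ Icc 0 t, ∀ y ∈ Icc 0 t, |x - y| ≤ δ → |g x - g y| ≤ η) :
    |∫ s in k * δ..(k + 1) * δ, (tauWeight t δ s - 1 / 2) * g s| ≤ 1 / 2 * η * δ := by
  have hle : (k : ℝ) * δ ≤ (k + 1) * δ := by gcongr; linarith
  have hkmem : (k : ℝ) * δ ∈ Icc 0 t := ⟨by positivity, hle.trans hk⟩
  have hk1mem : (k + 1 : ℝ) * δ ∈ Icc 0 t := ⟨by positivity, hk⟩
  have hzero : ∫ s in k * δ..(k + 1) * δ, (tauWeight t δ s - 1 / 2) = 0 := by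
    exact_mod_cast integral_tauWeight_sub_half_eq_zero (k := k) hδ (by exact_mod_cast hk)
  have hw : IntegrableOn (fun s => tauWeight t δ s - 1 / 2) (Icc 0 t) := by
    simpa using integrableOn_tauWeight_sub_half_mul hδ (g := 1) (integrableOn_const (by simp))
  have hcell : ∀ x ∈ uIoc ((k : ℝ) * δ) ((k + 1) * δ), x ∈ Icc 0 t ∧ |x - k * δ| ≤ δ := by
    intro x hx
    rw [uIoc_of_le hle] at hx
    exact ⟨⟨hkmem.1.trans hx.1.le, hx.2.trans hk⟩,
      abs_le.2 ⟨by linarith [hx.1], by linarith [hx.2]⟩⟩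
  calc _ ≤ 1 / 2 * η * |(k + 1) * δ - k * δ| :=
        intervalIntegral.abs_integral_mul_le_of_integral_eq_zero
          (hw.intervalIntegrable_of_mem_Icc hkmem hk1mem)
          ((integrableOn_tauWeight_sub_half_mul hδ hg).intervalIntegrable_of_mem_Icc hkmem hk1mem)
          hzero
          (fun x hx => abs_tauWeight_sub_half_le hδ (hcell x hx).1.2)
          (fun x hx => hη x (hcell x hx).1 _ hkmem (hcell x hx).2)
    _ = 1 / 2 * η * δ := by rw [show (k + 1 : ℝ) * δ - k * δ = δ by ring, abs_of_pos hδ]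

lemma abs_integral_tauWeight_sub_half_mul_le_of_abs_le {t δ a C : ℝ} {g : ℝ → ℝ} (hδ : 0 < δ)
    (ha : 0 ≤ a) (hat : a ≤ t) (hC : ∀ x ∈ Icc 0 t, |g x| ≤ C) :
    |∫ s in a..t, (tauWeight t δ s - 1 / 2) * g s| ≤ 1 / 2 * C * (t - a) := by
  rw [← Real.norm_eq_abs, ← abs_of_nonneg (sub_nonneg.2 hat)]
  refine intervalIntegral.norm_integral_le_of_norm_le_const fun x hx => ?_
  rw [uIoc_of_le hat] at hx
  rw [Real.norm_eq_abs, abs_mul]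
  exact mul_le_mul (abs_tauWeight_sub_half_le hδ hx.2) (hC x ⟨ha.trans hx.1.le, hx.2⟩)
    (abs_nonneg _) (by norm_num)

lemma abs_integral_tauWeight_sub_half_mul_le {t δ C η : ℝ} (hδ : 0 < δ) (ht : 0 ≤ t)
    {g : ℝ → ℝ} (hg : IntegrableOn g (Icc 0 t)) (hC : ∀ x ∈ Icc 0 t, |g x| ≤ C)
    (hη : ∀ x ∈ Icc 0 t, ∀ y ∈ Icc 0 t, |x - y| ≤ δ → |g x - g y| ≤ η) :
    |∫ s in 0..t, (tauWeight t δ s - 1 / 2) * g s| ≤ (t * η + C * δ) / 2 := by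
  set n := ⌊t / δ⌋₊
  have hnt : n * δ ≤ t := (le_div_iff₀ hδ).1 (Nat.floor_le (div_nonneg ht hδ.le))
  have htn : t < (n + 1) * δ := (div_lt_iff₀ hδ).1 (Nat.lt_floor_add_one _)
  have hmem : ∀ k ≤ n, (k : ℝ) * δ ∈ Icc 0 t := fun k hk =>
    ⟨by positivity, le_trans (by gcongr) hnt⟩
  have hF : ∀ {a b}, a ∈ Icc 0 t → b ∈ Icc 0 t →
      IntervalIntegrable (fun s => (tauWeight t δ s - 1 / 2) * g s) volume a b :=
    (integrableOn_tauWeight_sub_half_mul hδ hg).intervalIntegrable_of_mem_Icc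
  have hsplit : ∫ s in 0..t, (tauWeight t δ s - 1 / 2) * g s =
      (∑ k ∈ Finset.range n, ∫ s in k * δ..(k + 1) * δ, (tauWeight t δ s - 1 / 2) * g s)
        + ∫ s in n * δ..t, (tauWeight t δ s - 1 / 2) * g s := by
    have hsum := intervalIntegral.sum_integral_adjacent_intervals (a := fun k : ℕ => k * δ)
      (n := n) fun k hk => hF (hmem k hk.le) (hmem (k + 1) hk)
    push_cast at hsum
    rw [hsum, zero_mul, intervalIntegral.integral_add_adjacent_intervals
      (hF ⟨le_rfl, ht⟩ (hmem n le_rfl)) (hF (hmem n le_rfl) ⟨ht, le_rfl⟩)]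
  have hcell : ∀ k ∈ Finset.range n,
      |∫ s in k * δ..(k + 1) * δ, (tauWeight t δ s - 1 / 2) * g s| ≤ 1 / 2 * η * δ := by
    intro k hk
    have hk1 : ((k + 1 : ℕ) : ℝ) * δ ≤ t := le_trans (by gcongr; exact Finset.mem_range.1 hk) hnt
    push_cast at hk1
    exact abs_integral_tauWeight_sub_half_mul_cell_le hδ hk1 hg hη
  have htail := abs_integral_tauWeight_sub_half_mul_le_of_abs_le hδ (hmem n le_rfl).1 hnt hC
  have hη0 : 0 ≤ η := (abs_nonneg _).trans (hη 0 ⟨le_rfl, ht⟩ 0 ⟨le_rfl, ht⟩ (by simp [hδ.le]))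
  have hC0 : 0 ≤ C := (abs_nonneg _).trans (hC 0 ⟨le_rfl, ht⟩)
  calc |∫ s in 0..t, (tauWeight t δ s - 1 / 2) * g s|
      ≤ (∑ k ∈ Finset.range n, |∫ s in k * δ..(k + 1) * δ, (tauWeight t δ s - 1 / 2) * g s|)
        + |∫ s in n * δ..t, (tauWeight t δ s - 1 / 2) * g s| := by
        rw [hsplit]
        exact (abs_add_le _ _).trans (add_le_add_left (Finset.abs_sum_le_sum_abs _ _) _)
    _ ≤ n * (1 / 2 * η * δ) + 1 / 2 * C * (t - n * δ) := by
        gcongr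
        simpa using Finset.sum_le_card_nsmul _ _ _ hcell
    _ ≤ (t * η + C * δ) / 2 := by nlinarith

theorem tendsto_integral_mul_of_tendsto_continuous {α ι : Type*} [TopologicalSpace α]
    [NormalSpace α] [R1Space α] [WeaklyLocallyCompactSpace α] [MeasurableSpace α] [BorelSpace α]
    {μ : Measure α} [μ.Regular] {l : Filter ι} {φ : ι → α → ℝ} {M : ℝ}
    (hφm : ∀ i, AEStronglyMeasurable (φ i) μ) (hφM : ∀ᶠ i in l, ∀ᵐ x ∂μ, |φ i x| ≤ M)
    (hcont : ∀ g : α → ℝ, Continuous g → HasCompactSupport g →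
      Tendsto (fun i => ∫ x, φ i x * g x ∂μ) l (𝓝 0))
    {H : α → ℝ} (hH : Integrable H μ) :
    Tendsto (fun i => ∫ x, φ i x * H x ∂μ) l (𝓝 0) := by
  rw [Metric.tendsto_nhds]
  intro ε hε
  set η := ε / (2 * (|M| + 1))
  obtain ⟨g, hgc, hHg, hg, hgi⟩ := hH.exists_hasCompactSupport_integral_sub_le
    (show 0 < η by positivity)
  filter_upwards [Metric.tendsto_nhds.1 (hcont g hg hgc) (ε / 2) (half_pos hε), hφM]
    with i hφg hφi
  have hφi' : ∀ᵐ x ∂μ, ‖φ i x‖ ≤ M := hφi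
  have hsplit : ∫ x, φ i x * H x ∂μ = ∫ x, φ i x * (H x - g x) ∂μ + ∫ x, φ i x * g x ∂μ := by
    have hHg' : Integrable (fun x => H x - g x) μ := hH.sub hgi
    rw [← integral_add (hHg'.bdd_mul (hφm i) hφi') (hgi.bdd_mul (hφm i) hφi')]
    simp only [mul_sub, sub_add_cancel]
  have herr : |∫ x, φ i x * (H x - g x) ∂μ| ≤ |M| * η := by
    rw [← Real.norm_eq_abs]
    calc _ ≤ ∫ x, |M| * ‖H x - g x‖ ∂μ := by
          refine norm_integral_le_of_norm_le ((hH.sub hgi).norm.const_mul _) ?_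
          filter_upwards [hφi'] with x hx
          rw [norm_mul]
          exact mul_le_mul_of_nonneg_right (hx.trans (le_abs_self M)) (norm_nonneg _)
      _ ≤ |M| * η := by
          rw [integral_const_mul]
          exact mul_le_mul_of_nonneg_left hHg (abs_nonneg M)
  have hMη : |M| * η < ε / 2 := by
    rw [mul_div_assoc', div_lt_iff₀ (by positivity)]
    nlinarith [abs_nonneg M]
  rw [Real.dist_eq, sub_zero] at hφg ⊢
  rw [hsplit]
  linarith [abs_add_le (∫ x, φ i x * (H x - g x) ∂μ) (∫ x, φ i x * g x ∂μ)]

theorem ContinuousOn.tendsto_integral_tauWeight_sub_half_mul {t : ℝ} {g : ℝ → ℝ}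
    (hg : ContinuousOn g (Icc 0 t)) (ht : 0 ≤ t) :
    Tendsto (fun δ => ∫ s in 0..t, (tauWeight t δ s - 1 / 2) * g s) (𝓝[>] 0) (𝓝 0) := by
  obtain ⟨C, hC⟩ := isCompact_Icc.exists_bound_of_continuousOn hg
  have hC0 : 0 ≤ C := (norm_nonneg _).trans (hC 0 ⟨le_rfl, ht⟩)
  have hunif :=
    Metric.uniformContinuousOn_iff.1 (isCompact_Icc.uniformContinuousOn_of_continuous hg)
  rw [Metric.tendsto_nhds]
  intro ε hε
  obtain ⟨d, hd, hgd⟩ := hunif (ε / (t + 1)) (by positivity)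
  filter_upwards [Ioo_mem_nhdsGT (lt_min hd (show 0 < ε / (C + 1) by positivity))]
    with δ ⟨hδ, hδd⟩
  have hη : ∀ x ∈ Icc 0 t, ∀ y ∈ Icc 0 t, |x - y| ≤ δ → |g x - g y| ≤ ε / (t + 1) :=
    fun x hx y hy hxy => (hgd x hx y hy (hxy.trans_lt (hδd.trans_le (min_le_left _ _)))).le
  have htη : t * (ε / (t + 1)) < ε := by
    rw [mul_div_assoc', div_lt_iff₀ (by positivity)]
    nlinarith
  have hCδ : C * δ < ε := by
    have := (lt_div_iff₀ (by positivity)).1 (hδd.trans_le (min_le_right _ _))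
    nlinarith
  rw [Real.dist_eq, sub_zero]
  calc _ ≤ (t * (ε / (t + 1)) + C * δ) / 2 :=
        abs_integral_tauWeight_sub_half_mul_le hδ ht hg.integrableOn_Icc hC hη
    _ < ε := by linarith

theorem MeasureTheory.IntegrableOn.tendsto_integral_tauWeight_sub_half_mul {t : ℝ} {H : ℝ → ℝ}
    (hH : IntegrableOn H (Icc 0 t)) (ht : 0 ≤ t) :
    Tendsto (fun δ => ∫ s in 0..t, (tauWeight t δ s - 1 / 2) * H s) (𝓝[>] 0) (𝓝 0) := by
  have : (volume.restrict (Ioc 0 t)).Regular :=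
    Measure.Regular.restrict_of_measure_ne_top measure_Ioc_lt_top.ne
  simp only [intervalIntegral.integral_of_le ht]
  refine tendsto_integral_mul_of_tendsto_continuous (M := 1 / 2)
    (fun δ => ((measurable_tauWeight t δ).sub_const _).aestronglyMeasurable) ?_
    (fun g hg _ => ?_) (hH.mono_set Ioc_subset_Icc_self)
  · filter_upwards [self_mem_nhdsWithin] with δ hδ
    exact (ae_restrict_iff' measurableSet_Ioc).2 <|
      ae_of_all _ fun s hs => abs_tauWeight_sub_half_le hδ hs.2
  · simpa only [intervalIntegral.integral_of_le ht] using
      hg.continuousOn.tendsto_integral_tauWeight_sub_half_mul ht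

lemma integral_tauWeight_sub_half_mul {t δ : ℝ} {H : ℝ → ℝ} (hδ : 0 < δ) (ht : 0 ≤ t)
    (hH : IntegrableOn H (Icc 0 t)) :
    ∫ s in 0..t, (tauWeight t δ s - 1 / 2) * H s =
      (∫ s in 0..t, tauWeight t δ s * H s) - 1 / 2 * ∫ s in 0..t, H s := by
  have h0 : (0 : ℝ) ∈ Icc 0 t := ⟨le_rfl, ht⟩
  have ht' : t ∈ Icc 0 t := ⟨ht, le_rfl⟩
  rw [eq_sub_iff_add_eq, ← intervalIntegral.integral_const_mul,
    ← intervalIntegral.integral_add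
      ((integrableOn_tauWeight_sub_half_mul hδ hH).intervalIntegrable_of_mem_Icc h0 ht')
      ((hH.intervalIntegrable_of_mem_Icc h0 ht').const_mul _)]
  simp only [sub_mul, sub_add_cancel]

/-- **Lemma 4.1, first assertion**: with `τ_δ(s) = min(t, (⌊s/δ⌋ + 1)δ) - s`, for every
measurable square-integrable `H` on `[0, t]` we have
`∫_0^t (τ_δ(s)/δ) H_s ds → (1/2) ∫_0^t H_s ds` as `δ → 0⁺`. -/
theorem tendsto_integral_tau_div_delta
    (t : ℝ) (ht : 0 < t) (H : ℝ → ℝ) (hHmeas : Measurable H)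
    (hH2 : IntegrableOn (fun s => H s ^ 2) (Icc 0 t)) :
    Tendsto
      (fun δ : ℝ =>
        ∫ s in (0 : ℝ)..t, ((min t (((⌊s / δ⌋ : ℤ) + 1 : ℝ) * δ) - s) / δ) * H s)
      (nhdsWithin 0 (Ioi 0))
      (nhds ((1 / 2) * ∫ s in (0 : ℝ)..t, H s)) := by
  have hH : IntegrableOn H (Icc 0 t) :=
    ((memLp_two_iff_integrable_sq hHmeas.aestronglyMeasurable).2 hH2).integrable one_le_two
  refine tendsto_sub_nhds_zero_iff.1 <|
    (hH.tendsto_integral_tauWeight_sub_half_mul ht.le).congr' ?_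
  filter_upwards [self_mem_nhdsWithin] with δ hδ
  exact integral_tauWeight_sub_half_mul hδ ht.le hH
end

section
/- Fix t > 0. For δ > 0 define τ_δ(s) = min(t, (⌊s/δ⌋ + 1)δ) − s for s ∈ [0, t]. If H : [0, t] → ℝ is measurable with ∫_0^t H_s² ds < ∞, then ∫_0^t (2 τ_δ(s)/δ − 1)² H_s ds → (1/3) ∫_0^t H_s ds as δ → 0⁺. -/
/-!
Away from the last grid cell, `2 τ_δ(s) / δ - 1 = 1 - 2 fract(s / δ)`, so the weight is `ψ(s / δ)`
for the continuous `1`-periodic function `ψ x = (1 - 2 fract x)²`, whose mean is `1/3`. For a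
continuous periodic `φ`, `φ(s / δ)` converges weakly to its mean against `L¹` functions: for
smooth compactly supported `g`, integrating by parts against `δ Φ(s / δ)`, where `Φ` is the
(periodic, hence bounded) primitive of `φ` minus its mean, gives a bound `O(δ)`, and such `g` are
dense in `L¹`. The last cell shrinks to the point `t`, so by dominated convergence it contributes
nothing in the limit.
-/

open MeasureTheory Filter Set Function Topology
open scoped ContDiff

section Density

variable {E : Type*} [NormedAddCommGroup E] [NormedSpace ℝ E] [FiniteDimensional ℝ E]
  [MeasurableSpace E] [BorelSpace E] {μ : Measure E} [IsFiniteMeasureOnCompacts μ]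
  {ι : Type*} {l : Filter ι}

theorem tendsto_integral_mul_zero_of_forall_contDiff {K : ι → E → ℝ} {C : ℝ}
    (hK : ∀ i, AEStronglyMeasurable (K i) μ) (hKC : ∀ i x, ‖K i x‖ ≤ C)
    (hsmooth : ∀ g : E → ℝ, HasCompactSupport g → ContDiff ℝ ∞ g →
      Tendsto (fun i => ∫ x, K i x * g x ∂μ) l (𝓝 0))
    {f : E → ℝ} (hf : Integrable f μ) :
    Tendsto (fun i => ∫ x, K i x * f x ∂μ) l (𝓝 0) := by
  rw [Metric.tendsto_nhds]
  intro ε hε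
  set η := ε / 2 / (|C| + 1)
  obtain ⟨g, hg_supp, hg_smooth, hfg⟩ :=
    (memLp_one_iff_integrable.2 hf).exist_eLpNorm_sub_le ENNReal.one_ne_top le_rfl
      (ε := η) (by positivity)
  have hg : Integrable g μ := hg_smooth.continuous.integrable_of_hasCompactSupport hg_supp
  have hfg_int : Integrable (fun x => ‖f x - g x‖) μ := (hf.sub hg).norm
  have hfg_le : ∫ x, ‖f x - g x‖ ∂μ ≤ η := by
    change ∫ x, ‖(f - g) x‖ ∂μ ≤ η
    rw [integral_norm_eq_lintegral_enorm (hf.sub hg).aestronglyMeasurable,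
      ← eLpNorm_one_eq_lintegral_enorm]
    exact ENNReal.toReal_le_of_le_ofReal (by positivity) hfg
  have happrox : ∀ i, ‖∫ x, K i x * f x ∂μ - ∫ x, K i x * g x ∂μ‖ ≤ ε / 2 := by
    intro i
    have hKf := hf.bdd_mul (hK i) (.of_forall (hKC i))
    have hKg := hg.bdd_mul (hK i) (.of_forall (hKC i))
    calc ‖∫ x, K i x * f x ∂μ - ∫ x, K i x * g x ∂μ‖
        = ‖∫ x, K i x * (f x - g x) ∂μ‖ := by
          rw [← integral_sub hKf hKg]; simp only [mul_sub]
      _ ≤ ∫ x, C * ‖f x - g x‖ ∂μ :=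
          norm_integral_le_of_norm_le (hfg_int.const_mul C) (.of_forall fun x => by
            rw [norm_mul]; exact mul_le_mul_of_nonneg_right (hKC i x) (norm_nonneg _))
      _ ≤ |C| * η := by
          rw [integral_const_mul]
          exact (mul_le_mul_of_nonneg_right (le_abs_self C)
            (integral_nonneg fun _ => norm_nonneg _)).trans
              (mul_le_mul_of_nonneg_left hfg_le (abs_nonneg C))
      _ ≤ ε / 2 := by
          rw [mul_div_assoc', div_le_iff₀ (by positivity)]
          nlinarith [abs_nonneg C]
  filter_upwards [Metric.tendsto_nhds.1 (hsmooth g hg_supp hg_smooth) (ε / 2) (half_pos hε)]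
    with i hi
  rw [dist_zero_right] at hi ⊢
  calc ‖∫ x, K i x * f x ∂μ‖
      ≤ ‖∫ x, K i x * f x ∂μ - ∫ x, K i x * g x ∂μ‖ + ‖∫ x, K i x * g x ∂μ‖ :=
        norm_le_norm_sub_add _ _
    _ < ε / 2 + ε / 2 := add_lt_add_of_le_of_lt (happrox i) hi
    _ = ε := add_halves ε

end Density

theorem tendsto_integral_mul_of_tendsto_sub {α ι : Type*} [MeasurableSpace α] {μ : Measure α}
    {l : Filter ι} [l.IsCountablyGenerated] {K L : ι → α → ℝ} {C c : ℝ} {f : α → ℝ}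
    (hK : ∀ i, AEStronglyMeasurable (K i) μ) (hL : ∀ i, AEStronglyMeasurable (L i) μ)
    (hKC : ∀ᶠ i in l, ∀ᵐ x ∂μ, ‖K i x‖ ≤ C) (hLC : ∀ᶠ i in l, ∀ᵐ x ∂μ, ‖L i x‖ ≤ C)
    (hKL : ∀ᵐ x ∂μ, Tendsto (fun i => K i x - L i x) l (𝓝 0)) (hf : Integrable f μ)
    (hLf : Tendsto (fun i => ∫ x, L i x * f x ∂μ) l (𝓝 c)) :
    Tendsto (fun i => ∫ x, K i x * f x ∂μ) l (𝓝 c) := by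
  have hdiff : Tendsto (fun i => ∫ x, (K i x - L i x) * f x ∂μ) l (𝓝 0) := by
    have := tendsto_integral_filter_of_dominated_convergence (fun x => (C + C) * ‖f x‖)
      (F := fun i x => (K i x - L i x) * f x)
      (.of_forall fun i => ((hK i).sub (hL i)).mul hf.aestronglyMeasurable)
      (hKC.and hLC |>.mono fun i ⟨hKi, hLi⟩ => by
        filter_upwards [hKi, hLi] with x hKx hLx
        rw [norm_mul]
        exact mul_le_mul_of_nonneg_right ((norm_sub_le _ _).trans (add_le_add hKx hLx))
          (norm_nonneg _))
      (hf.norm.const_mul _)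
      (hKL.mono fun x hx => by simpa using hx.mul_const (f x))
    simpa using this
  have hsum := hdiff.add hLf
  refine (zero_add c ▸ hsum).congr' ?_
  filter_upwards [hKC, hLC] with i hKi hLi
  have hKLf : Integrable (fun x => (K i x - L i x) * f x) μ :=
    hf.bdd_mul ((hK i).sub (hL i)) (by
      filter_upwards [hKi, hLi] with x hKx hLx
      exact (norm_sub_le _ _).trans (add_le_add hKx hLx))
  have hLf : Integrable (fun x => L i x * f x) μ := hf.bdd_mul (hL i) hLi
  rw [← integral_add hKLf hLf]
  simp only [sub_mul, sub_add_cancel]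

section Oscillation

variable {φ : ℝ → ℝ} {T : ℝ}

theorem Function.Periodic.periodic_primitive_of_integral_eq_zero (hper : Periodic φ T)
    (hφ : ∀ a b, IntervalIntegrable φ volume a b) (hmean : ∫ x in 0..T, φ x = 0) :
    Periodic (fun x => ∫ u in 0..x, φ u) T := fun x => by
  simp only [hper.intervalIntegral_add_eq_add 0 x hφ, zero_add, hmean, add_zero]

theorem tendsto_integral_comp_div_mul_zero_of_contDiff (hφ : Continuous φ) (hper : Periodic φ T)
    (hT : T ≠ 0) (hmean : ∫ x in 0..T, φ x = 0) {g : ℝ → ℝ} (hg_supp : HasCompactSupport g)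
    (hg : ContDiff ℝ 1 g) :
    Tendsto (fun δ => ∫ s, φ (s / δ) * g s) (𝓝[≠] 0) (𝓝 0) := by
  set Φ : ℝ → ℝ := fun x => ∫ u in 0..x, φ u
  have hΦ : ∀ x, HasDerivAt Φ (φ x) x := fun x =>
    intervalIntegral.integral_hasDerivAt_right (hφ.intervalIntegrable _ _)
      (hφ.stronglyMeasurableAtFilter _ _) hφ.continuousAt
  have hΦ_cont : Continuous Φ := continuous_iff_continuousAt.2 fun x => (hΦ x).continuousAt
  have hΦ_per : Periodic Φ T :=
    hper.periodic_primitive_of_integral_eq_zero (hφ.intervalIntegrable · ·) hmean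
  obtain ⟨C, hC⟩ := (hΦ_per.isBounded_of_continuous hT hΦ_cont).exists_norm_le
  have hg' : Continuous (deriv g) := hg.continuous_deriv le_rfl
  have hibp : ∀ δ ≠ 0, ∫ s, φ (s / δ) * g s = -(δ * ∫ s, Φ (s / δ) * deriv g s) := by
    intro δ hδ
    have hv : ∀ s, HasDerivAt (fun s => δ * Φ (s / δ)) (φ (s / δ)) s := fun s => by
      exact (((hΦ (s / δ)).comp s ((hasDerivAt_id s).div_const δ)).const_mul δ).congr_deriv
        (by rw [one_div, mul_left_comm, mul_inv_cancel₀ hδ, mul_one])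
    have hv_cont : Continuous fun s => δ * Φ (s / δ) := by fun_prop
    have hparts := integral_mul_deriv_eq_deriv_mul_of_integrable
      (u := g) (u' := deriv g) (v := fun s => δ * Φ (s / δ)) (v' := fun s => φ (s / δ))
      (fun s _ => (hg.differentiable one_ne_zero s).hasDerivAt) (fun s _ => hv s)
      ((hg.continuous.mul (by fun_prop)).integrable_of_hasCompactSupport hg_supp.mul_right)
      ((hg'.mul hv_cont).integrable_of_hasCompactSupport hg_supp.deriv.mul_right)
      ((hg.continuous.mul hv_cont).integrable_of_hasCompactSupport hg_supp.mul_right)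
    simp_rw [mul_comm (φ _), hparts, mul_left_comm (deriv g _), integral_const_mul,
      mul_comm (deriv g _)]
  have hbound : ∀ δ ≠ 0, ‖∫ s, φ (s / δ) * g s‖ ≤ |δ| * ∫ s, C * ‖deriv g s‖ := by
    intro δ hδ
    rw [hibp δ hδ, norm_neg, norm_mul, Real.norm_eq_abs]
    gcongr
    exact norm_integral_le_of_norm_le
      ((hg'.integrable_of_hasCompactSupport hg_supp.deriv).norm.const_mul C)
      (.of_forall fun s => by
        rw [norm_mul]; exact mul_le_mul_of_nonneg_right (hC _ ⟨_, rfl⟩) (norm_nonneg _))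
  have hlim : Tendsto (fun δ : ℝ => |δ| * ∫ s, C * ‖deriv g s‖) (𝓝[≠] 0) (𝓝 0) := by
    have : Continuous fun δ : ℝ => |δ| * ∫ s, C * ‖deriv g s‖ := by fun_prop
    exact (this.tendsto' 0 0 (by simp)).mono_left nhdsWithin_le_nhds
  exact squeeze_zero_norm' (eventually_nhdsWithin_of_forall hbound) hlim

theorem tendsto_integral_comp_div_mul (hφ : Continuous φ) (hper : Periodic φ T) (hT : T ≠ 0)
    {f : ℝ → ℝ} (hf : Integrable f) :
    Tendsto (fun δ => ∫ s, φ (s / δ) * f s) (𝓝[≠] 0)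
      (𝓝 ((T⁻¹ * ∫ x in 0..T, φ x) * ∫ s, f s)) := by
  set m := T⁻¹ * ∫ x in 0..T, φ x
  have hψ : Continuous fun x => φ x - m := by fun_prop
  have hψ_per : Periodic (fun x => φ x - m) T := fun x => by simp only [hper x]
  have hψ_mean : ∫ x in 0..T, (φ x - m) = 0 := by
    rw [intervalIntegral.integral_sub (hφ.intervalIntegrable _ _) intervalIntegrable_const,
      intervalIntegral.integral_const, smul_eq_mul, sub_zero, mul_inv_cancel_left₀ hT, sub_self]
  obtain ⟨C, hC⟩ := (hψ_per.isBounded_of_continuous hT hψ).exists_norm_le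
  have hbound : ∀ δ s, ‖φ (s / δ) - m‖ ≤ C := fun δ s => hC _ ⟨_, rfl⟩
  have hψ_comp : ∀ δ, Continuous fun s => φ (s / δ) - m := fun δ => by fun_prop
  have hzero : Tendsto (fun δ => ∫ s, (φ (s / δ) - m) * f s) (𝓝[≠] 0) (𝓝 0) :=
    tendsto_integral_mul_zero_of_forall_contDiff (fun δ => (hψ_comp δ).aestronglyMeasurable)
      hbound (fun g hg_supp hg => tendsto_integral_comp_div_mul_zero_of_contDiff hψ hψ_per hT
        hψ_mean hg_supp (hg.of_le (by simp))) hf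
  have hsplit : ∀ δ,
      ∫ s, φ (s / δ) * f s = (∫ s, (φ (s / δ) - m) * f s) + m * ∫ s, f s := by
    intro δ
    have hψf : Integrable fun s => (φ (s / δ) - m) * f s :=
      hf.bdd_mul (hψ_comp δ).aestronglyMeasurable (.of_forall (hbound δ))
    rw [← integral_const_mul, ← integral_add hψf (hf.const_mul m)]
    simp only [sub_mul, sub_add_cancel]
  simpa only [hsplit, zero_add] using hzero.add_const (m * ∫ s, f s)

end Oscillation

theorem continuous_one_sub_two_mul_fract_sq :
    Continuous fun x : ℝ => (1 - 2 * Int.fract x) ^ 2 :=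
  ContinuousOn.comp_fract'' (f := fun y : ℝ => (1 - 2 * y) ^ 2) (by fun_prop) (by norm_num)

theorem periodic_one_sub_two_mul_fract_sq :
    Periodic (fun x : ℝ => (1 - 2 * Int.fract x) ^ 2) 1 :=
  fun x => by simp only [Int.fract_add_one]

theorem one_sub_two_mul_fract_sq_le_one (x : ℝ) : (1 - 2 * Int.fract x) ^ 2 ≤ 1 := by
  nlinarith [Int.fract_nonneg x, Int.fract_lt_one x]

theorem integral_one_sub_two_mul_fract_sq :
    ∫ x in (0 : ℝ)..1, (1 - 2 * Int.fract x) ^ 2 = 1 / 3 := by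
  have hIcc : EqOn (fun x : ℝ => (1 - 2 * Int.fract x) ^ 2) (fun x => (1 - 2 * x) ^ 2)
      (uIcc 0 1) := by
    intro x hx
    rw [uIcc_of_le zero_le_one] at hx
    rcases hx.2.eq_or_lt with rfl | hx1
    · norm_num
    · simp only [Int.fract_eq_self.2 ⟨hx.1, hx1⟩]
  rw [intervalIntegral.integral_congr hIcc,
    intervalIntegral.integral_comp_sub_mul (fun x => x ^ 2) two_ne_zero]
  norm_num [integral_pow]

theorem tendsto_setIntegral_one_sub_two_mul_fract_sq_mul {S : Set ℝ} (hS : MeasurableSet S)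
    {H : ℝ → ℝ} (hH : IntegrableOn H S) :
    Tendsto (fun δ => ∫ s in S, (1 - 2 * Int.fract (s / δ)) ^ 2 * H s) (𝓝[≠] 0)
      (𝓝 ((1 / 3) * ∫ s in S, H s)) := by
  have h := tendsto_integral_comp_div_mul continuous_one_sub_two_mul_fract_sq
    periodic_one_sub_two_mul_fract_sq one_ne_zero (hH.integrable_indicator hS)
  have hind : ∀ δ, ∫ s, (1 - 2 * Int.fract (s / δ)) ^ 2 * S.indicator H s
      = ∫ s in S, (1 - 2 * Int.fract (s / δ)) ^ 2 * H s := fun δ => by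
    simp only [← integral_indicator hS, indicator_mul_right]
  simpa only [hind, integral_one_sub_two_mul_fract_sq, inv_one, one_mul,
    integral_indicator hS] using h

noncomputable def tau (t δ s : ℝ) : ℝ := min t (((⌊s / δ⌋ : ℤ) + 1 : ℝ) * δ) - s

section Tau

variable {t δ s : ℝ}

theorem measurable_tau : Measurable (tau t δ) := by
  unfold tau; fun_prop

theorem tau_eq_of_add_le (hδ : 0 < δ) (hs : s + δ ≤ t) :
    tau t δ s = δ * (1 - Int.fract (s / δ)) := by
  have hfloor : (⌊s / δ⌋ : ℝ) * δ ≤ s := (le_div_iff₀ hδ).1 (Int.floor_le _)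
  rw [tau, min_eq_right (by linarith), Int.fract]
  field_simp
  ring

theorem tau_mem_Icc (hδ : 0 < δ) (hs : s ≤ t) : tau t δ s ∈ Icc 0 δ := by
  have hfloor : (⌊s / δ⌋ : ℝ) * δ ≤ s := (le_div_iff₀ hδ).1 (Int.floor_le _)
  have hceil : s < (⌊s / δ⌋ + 1 : ℝ) * δ := (div_lt_iff₀ hδ).1 (Int.lt_floor_add_one _)
  constructor
  · exact sub_nonneg.2 (le_min hs hceil.le)
  · exact sub_le_iff_le_add'.2 (min_le_of_right_le (by linarith))

theorem sq_two_mul_tau_div_sub_one_le_one (hδ : 0 < δ) (hs : s ≤ t) :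
    (2 * tau t δ s / δ - 1) ^ 2 ≤ 1 := by
  obtain ⟨h0, h1⟩ := tau_mem_Icc hδ hs
  have : 2 * tau t δ s / δ ∈ Icc 0 2 := ⟨by positivity, by rw [div_le_iff₀ hδ]; linarith⟩
  nlinarith [this.1, this.2]

theorem sq_two_mul_tau_div_sub_one_eq (hδ : 0 < δ) (hs : s + δ ≤ t) :
    (2 * tau t δ s / δ - 1) ^ 2 = (1 - 2 * Int.fract (s / δ)) ^ 2 := by
  rw [tau_eq_of_add_le hδ hs]
  field_simp
  ring

theorem tendsto_sq_two_mul_tau_div_sub_one_sub (hs : s < t) :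
    Tendsto (fun δ => (2 * tau t δ s / δ - 1) ^ 2 - (1 - 2 * Int.fract (s / δ)) ^ 2)
      (𝓝[>] 0) (𝓝 0) := by
  refine tendsto_const_nhds.congr' ?_
  filter_upwards [Ioo_mem_nhdsGT (sub_pos.2 hs)] with δ hδ
  rw [sq_two_mul_tau_div_sub_one_eq hδ.1 (by linarith [hδ.2]), sub_self]

end Tau

/-- **Lemma 4.1, second assertion**: with `τ_δ(s) = min(t, (⌊s/δ⌋ + 1)δ) - s`, for every
measurable square-integrable `H` on `[0, t]` we have
`∫_0^t (2 τ_δ(s)/δ - 1)² H_s ds → (1/3) ∫_0^t H_s ds` as `δ → 0⁺`. -/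
theorem tendsto_integral_sq_two_tau_div_delta_sub_one
    (t : ℝ) (ht : 0 < t) (H : ℝ → ℝ) (hHmeas : Measurable H)
    (hH2 : IntegrableOn (fun s => H s ^ 2) (Icc 0 t)) :
    Tendsto
      (fun δ : ℝ =>
        ∫ s in (0 : ℝ)..t,
          (2 * (min t (((⌊s / δ⌋ : ℤ) + 1 : ℝ) * δ) - s) / δ - 1) ^ 2 * H s)
      (nhdsWithin 0 (Ioi 0))
      (nhds ((1 / 3) * ∫ s in (0 : ℝ)..t, H s)) := by
  have hH_Icc : IntegrableOn H (Icc 0 t) :=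
    ((memLp_two_iff_integrable_sq hHmeas.aestronglyMeasurable).2 hH2).integrable one_le_two
  have hH : IntegrableOn H (Ioo 0 t) := hH_Icc.mono_set Ioo_subset_Icc_self
  have hosc := (tendsto_setIntegral_one_sub_two_mul_fract_sq_mul measurableSet_Ioo hH).mono_left
    (nhdsWithin_mono _ fun δ hδ => ne_of_gt hδ)
  have hweight_le : ∀ᶠ δ in 𝓝[>] (0 : ℝ), ∀ᵐ s ∂volume.restrict (Ioo 0 t),
      ‖(2 * tau t δ s / δ - 1) ^ 2‖ ≤ 1 := by
    filter_upwards [self_mem_nhdsWithin] with δ hδ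
    filter_upwards [ae_restrict_mem measurableSet_Ioo] with s hs
    rw [Real.norm_of_nonneg (sq_nonneg _)]
    exact sq_two_mul_tau_div_sub_one_le_one hδ hs.2.le
  have hfract_le : ∀ᶠ δ in 𝓝[>] (0 : ℝ), ∀ᵐ s ∂volume.restrict (Ioo 0 t),
      ‖(1 - 2 * Int.fract (s / δ)) ^ 2‖ ≤ 1 :=
    .of_forall fun δ => .of_forall fun s => by
      rw [Real.norm_of_nonneg (sq_nonneg _)]
      exact one_sub_two_mul_fract_sq_le_one _
  simp_rw [intervalIntegral.integral_of_le ht.le, integral_Ioc_eq_integral_Ioo]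
  exact tendsto_integral_mul_of_tendsto_sub
    (fun δ => (((measurable_tau.const_mul 2).div_const δ).sub_const 1).pow_const 2
      |>.aestronglyMeasurable)
    (fun δ => (continuous_one_sub_two_mul_fract_sq.comp (continuous_id.div_const δ))
      |>.aestronglyMeasurable)
    hweight_le hfract_le
    ((ae_restrict_mem measurableSet_Ioo).mono fun s hs =>
      tendsto_sq_two_mul_tau_div_sub_one_sub hs.2)
    hH hosc
end

section
/- Fix T > 0 and let g : [0, T] → ℝ be continuous. For δ > 0 and 0 ≤ s ≤ t ≤ T define τ_δ^t(s) = min(t, (⌊s/δ⌋ + 1)δ) − s. Then sup_{t ∈ [0, T]} | ∫_0^t (2 τ_δ^t(s)/δ − 1) g(s) ds | → 0 as δ → 0⁺. -/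
/-!
On a grid cell `[kδ, (k+1)δ] ⊆ [0, t]` the weight `2 τ_δ^t(s)/δ - 1` is the affine function going
from `1` down to `-1`, which has mean zero; so the cell contributes at most `δ ω_g(δ)`, where
`ω_g` is the modulus of continuity of `g`. The last, incomplete cell contributes at most
`δ sup |g|`. Hence `|∫_0^t …| ≤ T ω_g(δ) + δ sup |g|` uniformly in `t ∈ [0, T]`, and the right-hand
side tends to `0` by uniform continuity of `g` on `[0, T]`.
-/

open MeasureTheory Filter Set

/-- `sawtooth δ t s = 2 τ_δ^t(s) / δ - 1`. -/
noncomputable def sawtooth (δ t s : ℝ) : ℝ :=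
  2 * (min t (((⌊s / δ⌋ : ℤ) + 1 : ℝ) * δ) - s) / δ - 1

lemma abs_two_mul_div_sub_one_le {x d : ℝ} (h0 : 0 ≤ x) (h1 : x ≤ d) : |2 * x / d - 1| ≤ 1 := by
  have hd : 0 ≤ x / d := div_nonneg h0 (h0.trans h1)
  have hd1 : x / d ≤ 1 := div_le_one_of_le₀ h1 (h0.trans h1)
  rw [mul_div_assoc, abs_le]
  constructor <;> linarith

lemma integral_two_mul_sub_div_sub_one (a b : ℝ) :
    ∫ s in a..b, (2 * (b - s) / (b - a) - 1) = 0 := by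
  rcases eq_or_ne a b with rfl | hab
  · simp
  have : b - a ≠ 0 := sub_ne_zero.2 hab.symm
  rw [intervalIntegral.integral_sub
    ((by fun_prop : Continuous fun s : ℝ => 2 * (b - s) / (b - a)).intervalIntegrable _ _)
    intervalIntegrable_const, intervalIntegral.integral_div, intervalIntegral.integral_const_mul,
    intervalIntegral.integral_comp_sub_left (fun s => s)]
  simp
  field_simp
  ring

lemma abs_integral_two_mul_sub_div_sub_one_mul_le {a b c ε : ℝ} {g : ℝ → ℝ} (hab : a ≤ b)
    (hg : IntervalIntegrable g volume a b) (hgc : ∀ s ∈ Ioc a b, |g s - c| ≤ ε) :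
    |∫ s in a..b, (2 * (b - s) / (b - a) - 1) * g s| ≤ ε * (b - a) := by
  have hφ : Continuous fun s : ℝ => 2 * (b - s) / (b - a) - 1 := by fun_prop
  have hφc : IntervalIntegrable (fun s => (2 * (b - s) / (b - a) - 1) * c) volume a b :=
    (hφ.intervalIntegrable a b).mul_const c
  have hshift : ∫ s in a..b, (2 * (b - s) / (b - a) - 1) * g s
      = ∫ s in a..b, (2 * (b - s) / (b - a) - 1) * (g s - c) := calc
    _ = (∫ s in a..b, (2 * (b - s) / (b - a) - 1) * g s)
          - ∫ s in a..b, (2 * (b - s) / (b - a) - 1) * c := by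
      rw [intervalIntegral.integral_mul_const, integral_two_mul_sub_div_sub_one, zero_mul, sub_zero]
    _ = _ := by
      rw [← intervalIntegral.integral_sub (hg.continuousOn_mul hφ.continuousOn) hφc]
      simp only [mul_sub]
  rw [hshift, ← Real.norm_eq_abs]
  refine (intervalIntegral.norm_integral_le_of_norm_le_const fun s hs => ?_).trans_eq
    (by rw [abs_of_nonneg (sub_nonneg.2 hab)])
  rw [uIoc_of_le hab] at hs
  rw [Real.norm_eq_abs, abs_mul, ← one_mul ε]
  exact mul_le_mul (abs_two_mul_div_sub_one_le (by linarith [hs.2]) (by linarith [hs.1]))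
    (hgc s hs) (abs_nonneg _) zero_le_one

lemma integral_eq_sum_integral_grid_add {E : Type*} [NormedAddCommGroup E] [NormedSpace ℝ E]
    {f : ℝ → E} {δ t : ℝ} (hδ : 0 < δ) (ht : 0 ≤ t) (hf : IntervalIntegrable f volume 0 t) :
    ∫ s in 0..t, f s = (∑ k ∈ Finset.range ⌊t / δ⌋₊, ∫ s in k * δ..(k + 1) * δ, f s)
      + ∫ s in ⌊t / δ⌋₊ * δ..t, f s := by
  set n := ⌊t / δ⌋₊
  have hn : n * δ ≤ t := (le_div_iff₀ hδ).1 (Nat.floor_le (div_nonneg ht hδ.le))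
  have hsub : ∀ {a b : ℝ}, 0 ≤ a → a ≤ b → b ≤ t → IntervalIntegrable f volume a b :=
    fun ha hab hbt => hf.mono_set (by
      rw [uIcc_of_le hab, uIcc_of_le ht]; exact Icc_subset_Icc ha hbt)
  have hcells : ∑ k ∈ Finset.range n, ∫ s in k * δ..(k + 1) * δ, f s = ∫ s in 0..n * δ, f s := by
    have := intervalIntegral.sum_integral_adjacent_intervals (a := fun k : ℕ => k * δ) (n := n)
      (f := f) (μ := volume) fun k hk => hsub (by positivity) (by gcongr; simp)
        ((by gcongr; exact hk : ((k + 1 : ℕ) : ℝ) * δ ≤ n * δ).trans hn)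
    simpa using this
  rw [hcells, intervalIntegral.integral_add_adjacent_intervals
    (hsub le_rfl (by positivity) hn) (hsub (by positivity) hn le_rfl)]

lemma tendsto_biSup_abs_nhds_zero {α ι : Type*} {l : Filter α} {S : Set ι} {F : α → ι → ℝ}
    (h : ∀ ε > 0, ∀ᶠ x in l, ∀ i ∈ S, |F x i| ≤ ε) :
    Tendsto (fun x => ⨆ i ∈ S, |F x i|) l (nhds 0) := by
  refine Metric.tendsto_nhds.2 fun ε hε => (h (ε / 2) (half_pos hε)).mono fun x hx => ?_
  have hsup : ⨆ i ∈ S, |F x i| ≤ ε / 2 :=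
    Real.iSup_le (fun i => Real.iSup_le (hx i) (by positivity)) (by positivity)
  have hnonneg : 0 ≤ ⨆ i ∈ S, |F x i| :=
    Real.iSup_nonneg fun i => Real.iSup_nonneg fun _ => abs_nonneg _
  rw [Real.dist_eq, sub_zero, abs_of_nonneg hnonneg]
  linarith

section Sawtooth

variable {δ t s : ℝ}

lemma abs_sawtooth_le_one (hδ : 0 < δ) (hst : s ≤ t) : |sawtooth δ t s| ≤ 1 := by
  have hlt : s < (⌊s / δ⌋ + 1) * δ := (div_lt_iff₀ hδ).1 (Int.lt_floor_add_one _)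
  have hle : ⌊s / δ⌋ * δ ≤ s := (le_div_iff₀ hδ).1 (Int.floor_le _)
  refine abs_two_mul_div_sub_one_le (sub_nonneg.2 (le_min hst hlt.le)) ?_
  linarith [min_le_right t ((⌊s / δ⌋ + 1) * δ)]

lemma measurable_sawtooth : Measurable (sawtooth δ t) := by
  have : Measurable fun s : ℝ => (⌊s / δ⌋ : ℝ) :=
    measurable_from_top.comp (Int.measurable_floor.comp (measurable_id.div_const δ))
  unfold sawtooth
  fun_prop

lemma sawtooth_eq_of_mem_Ioo {k : ℕ} (hδ : 0 < δ) (hkt : (k + 1) * δ ≤ t)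
    (hs : s ∈ Ioo (k * δ) ((k + 1) * δ)) :
    sawtooth δ t s = 2 * ((k + 1) * δ - s) / ((k + 1) * δ - k * δ) - 1 := by
  have hfloor : ⌊s / δ⌋ = k := by
    rw [Int.floor_eq_iff, le_div_iff₀ hδ, div_lt_iff₀ hδ]
    push_cast
    exact ⟨hs.1.le, hs.2⟩
  rw [sawtooth, hfloor, show (k + 1) * δ - k * δ = δ by ring]
  push_cast
  rw [min_eq_right hkt]

lemma intervalIntegrable_sawtooth_mul {g : ℝ → ℝ} (hδ : 0 < δ) (ht : 0 ≤ t)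
    (hg : IntervalIntegrable g volume 0 t) :
    IntervalIntegrable (fun s => sawtooth δ t s * g s) volume 0 t := by
  rw [intervalIntegrable_iff_integrableOn_Ioc_of_le ht] at hg ⊢
  refine hg.bdd_mul (c := 1) measurable_sawtooth.aestronglyMeasurable
    (ae_restrict_of_forall_mem measurableSet_Ioc fun s hs => ?_)
  exact (Real.norm_eq_abs _).trans_le (abs_sawtooth_le_one hδ hs.2)

lemma abs_integral_sawtooth_mul_le_of_cell {g : ℝ → ℝ} {ε : ℝ} {k : ℕ} (hδ : 0 < δ)
    (hkt : (k + 1) * δ ≤ t) (hg : IntervalIntegrable g volume (k * δ) ((k + 1) * δ))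
    (hgc : ∀ s ∈ Ioc (k * δ) ((k + 1) * δ), |g s - g (k * δ)| ≤ ε) :
    |∫ s in k * δ..(k + 1) * δ, sawtooth δ t s * g s| ≤ ε * δ := by
  have hle : (k : ℝ) * δ ≤ (k + 1) * δ := by gcongr; linarith
  have hcongr : EqOn (fun s => sawtooth δ t s * g s)
      (fun s => (2 * ((k + 1) * δ - s) / ((k + 1) * δ - k * δ) - 1) * g s)
      (Ioo (k * δ) ((k + 1) * δ)) := fun s hs => by
    simp only [sawtooth_eq_of_mem_Ioo hδ hkt hs]
  rw [intervalIntegral.integral_congr_Ioo_of_le hle hcongr]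
  exact (abs_integral_two_mul_sub_div_sub_one_mul_le hle hg hgc).trans_eq (by ring)

lemma abs_integral_sawtooth_mul_le {g : ℝ → ℝ} {M ε : ℝ} (hδ : 0 < δ) (ht : 0 ≤ t)
    (hg : ContinuousOn g (Icc 0 t)) (hM : ∀ x ∈ Icc 0 t, |g x| ≤ M)
    (hgε : ∀ x ∈ Icc 0 t, ∀ y ∈ Icc 0 t, |x - y| ≤ δ → |g x - g y| ≤ ε) :
    |∫ s in 0..t, sawtooth δ t s * g s| ≤ t * ε + M * δ := by
  set n := ⌊t / δ⌋₊
  have hn : n * δ ≤ t := (le_div_iff₀ hδ).1 (Nat.floor_le (div_nonneg ht hδ.le))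
  have htn : t - n * δ ≤ δ := by
    have := (div_lt_iff₀ hδ).1 (Nat.lt_floor_add_one (t / δ))
    linarith
  have hε : 0 ≤ ε := (abs_nonneg _).trans (hgε 0 ⟨le_rfl, ht⟩ 0 ⟨le_rfl, ht⟩ (by simp [hδ.le]))
  have hgi : IntervalIntegrable g volume 0 t := (hg.mono (uIcc_of_le ht).subset).intervalIntegrable
  have hcell : ∀ k ∈ Finset.range n,
      |∫ s in k * δ..(k + 1) * δ, sawtooth δ t s * g s| ≤ ε * δ := by
    intro k hk
    have hkt : (k + 1) * δ ≤ t := by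
      have : (k + 1 : ℝ) ≤ n := by exact_mod_cast Finset.mem_range.1 hk
      exact (by gcongr : (k + 1) * δ ≤ n * δ).trans hn
    have hk0 : (0 : ℝ) ≤ k * δ := by positivity
    refine abs_integral_sawtooth_mul_le_of_cell hδ hkt (hgi.mono_set ?_) fun s hs => ?_
    · rw [uIcc_of_le ht, uIcc_of_le (by linarith)]; exact Icc_subset_Icc hk0 hkt
    · refine hgε s ⟨hk0.trans hs.1.le, hs.2.trans hkt⟩ _ ⟨hk0, by linarith⟩ ?_
      rw [abs_of_nonneg (by linarith [hs.1])]
      linarith [hs.2]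
  have hlast : |∫ s in n * δ..t, sawtooth δ t s * g s| ≤ M * δ := by
    rw [← Real.norm_eq_abs]
    refine (intervalIntegral.norm_integral_le_of_norm_le_const (C := M) fun s hs => ?_).trans ?_
    · rw [uIoc_of_le hn] at hs
      have hs0 : s ∈ Icc 0 t := ⟨(by positivity : (0 : ℝ) ≤ n * δ).trans hs.1.le, hs.2⟩
      rw [Real.norm_eq_abs, abs_mul, ← one_mul M]
      exact mul_le_mul (abs_sawtooth_le_one hδ hs.2) (hM s hs0) (abs_nonneg _) zero_le_one
    · have hM0 : 0 ≤ M := (abs_nonneg _).trans (hM 0 ⟨le_rfl, ht⟩)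
      rw [abs_of_nonneg (by linarith)]
      gcongr
  rw [integral_eq_sum_integral_grid_add hδ ht (intervalIntegrable_sawtooth_mul hδ ht hgi)]
  calc _ ≤ (∑ k ∈ Finset.range n, |∫ s in k * δ..(k + 1) * δ, sawtooth δ t s * g s|)
        + |∫ s in n * δ..t, sawtooth δ t s * g s| :=
        (abs_add_le _ _).trans (add_le_add_left (Finset.abs_sum_le_sum_abs _ _) _)
    _ ≤ n * (ε * δ) + M * δ := by
        gcongr
        simpa using Finset.sum_le_sum hcell
    _ ≤ t * ε + M * δ := by nlinarith

end Sawtooth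

/-- Uniform-in-time convergence `sup_{t ∈ [0,T]} B^δ_t → 0` from the proof of
Theorem 4.1: with `τ_δ^t(s) = min(t, (⌊s/δ⌋ + 1)δ) - s`, for continuous `g` on `[0, T]`,
`sup_{t ∈ [0,T]} |∫_0^t (2 τ_δ^t(s)/δ - 1) g(s) ds| → 0` as `δ → 0⁺`. -/
theorem tendsto_sup_integral_two_tau_div_delta_sub_one
    (T : ℝ) (hT : 0 < T) (g : ℝ → ℝ) (hg : ContinuousOn g (Icc 0 T)) :
    Tendsto
      (fun δ : ℝ =>
        ⨆ t ∈ Icc (0 : ℝ) T,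
          |∫ s in (0 : ℝ)..t,
            (2 * (min t (((⌊s / δ⌋ : ℤ) + 1 : ℝ) * δ) - s) / δ - 1) * g s|)
      (nhdsWithin 0 (Ioi 0))
      (nhds 0) := by
  obtain ⟨M, hM⟩ := isCompact_Icc.exists_bound_of_continuousOn hg
  refine tendsto_biSup_abs_nhds_zero fun ε hε => ?_
  obtain ⟨η, hη, hgη⟩ := Metric.uniformContinuousOn_iff.1
    (isCompact_Icc.uniformContinuousOn_of_continuous hg) (ε / (2 * T)) (by positivity)
  have hMδ : ∀ᶠ δ in nhdsWithin (0 : ℝ) (Ioi 0), M * δ ≤ ε / 2 :=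
    (((continuous_const_mul M).tendsto' 0 0 (mul_zero M)).mono_left nhdsWithin_le_nhds).eventually
      (Iic_mem_nhds (half_pos hε))
  filter_upwards [hMδ, Ioo_mem_nhdsGT hη] with δ hMδ hδ t ht
  have hsub : Icc 0 t ⊆ Icc 0 T := Icc_subset_Icc_right ht.2
  calc _ ≤ t * (ε / (2 * T)) + M * δ :=
        abs_integral_sawtooth_mul_le hδ.1 ht.1 (hg.mono hsub) (fun x hx => hM x (hsub hx))
          fun x hx y hy hxy => (hgη x (hsub hx) y (hsub hy) (hxy.trans_lt hδ.2)).le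
    _ ≤ T * (ε / (2 * T)) + ε / 2 := by gcongr; exact ht.2
    _ = ε := by field_simp; ring
end
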